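/- arXiv:1709.01835 — 2 statements merged into one kernel-verified Lean document; each statement's English description precedes it below -/
import Mathlib

section
/- Let Γ be a profinite group and G a finite group. Every continuous extension 1 → G → E → Γ → 1 of profinite groups (with G carrying the discrete topology and its image closed in E) is the pullback of an extension of finite groups: there exists an open normal subgroup H' ⊴ Γ and an extension 1 → G → Ẽ → Γ/H' → 1 of finite groups such that E ≅ Ẽ ×_{Γ/H'} Γ as topological groups. -/
/-- The fiber product `Ẽ ×_{Γ/H'} Γ` of `π̃ : Ẽ → Γ/H'` and the quotient map
`Γ → Γ/H'`, as a subgroup of the product `Ẽ × Γ`. -/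
def galoisFiberProduct {Et Γ : Type*} [Group Et] [Group Γ]
    (H' : Subgroup Γ) [H'.Normal] (πt : Et →* Γ ⧸ H') : Subgroup (Et × Γ) :=
  (πt.comp (MonoidHom.fst Et Γ)).eqLocus
    ((QuotientGroup.mk' H').comp (MonoidHom.snd Et Γ))

/-!
Since `ker π ≅ G` is finite and `E` is profinite, some open normal subgroup `N ⊴ E` meets
`ker π` trivially. Take `Ẽ = E ⧸ N` and `H' = π(N)`, which is open because `π` is an open map.
Then `x ↦ (x mod N, π x)` is a continuous isomorphism from `E` onto `Ẽ ×_{Γ/H'} Γ`: its kernel is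
`N ⊓ ker π = 1`, and it is onto because the fibres of `Γ → Γ/H'` are cosets of `π(N)`. Being a
continuous bijection from a compact space onto a Hausdorff one, it is a homeomorphism.
-/

open Function

section Pullback

variable {E Γ Et : Type*} [Group E] [Group Γ] [Group Et] {H' : Subgroup Γ} [H'.Normal]
  {q : E →* Et} {π : E →* Γ} {πt : Et →* Γ ⧸ H'}

def toGaloisFiberProduct (hcomm : πt.comp q = (QuotientGroup.mk' H').comp π) :
    E →* galoisFiberProduct H' πt :=
  (q.prod π).codRestrict _ fun x =>
    show πt (q x) = QuotientGroup.mk (π x) from DFunLike.congr_fun hcomm x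

theorem toGaloisFiberProduct_apply (hcomm : πt.comp q = (QuotientGroup.mk' H').comp π) (x : E) :
    (toGaloisFiberProduct hcomm x : Et × Γ) = (q x, π x) :=
  rfl

theorem ker_toGaloisFiberProduct (hcomm : πt.comp q = (QuotientGroup.mk' H').comp π) :
    (toGaloisFiberProduct hcomm).ker = q.ker ⊓ π.ker :=
  (MonoidHom.ker_codRestrict _ _ _).trans (MonoidHom.ker_prod _ _)

theorem toGaloisFiberProduct_surjective (hcomm : πt.comp q = (QuotientGroup.mk' H').comp π)
    (hq : Surjective q) (hH' : H' ≤ q.ker.map π) : Surjective (toGaloisFiberProduct hcomm) := by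
  rintro ⟨⟨y, γ⟩, hyγ⟩
  obtain ⟨x, rfl⟩ := hq y
  have hx : πt (q x) = γ := hyγ
  obtain ⟨n, hn, hnγ⟩ : (π x)⁻¹ * γ ∈ q.ker.map π := by
    apply hH'
    rw [← QuotientGroup.eq, ← hx]
    exact (DFunLike.congr_fun hcomm x).symm
  refine ⟨x * n, Subtype.ext (Prod.ext ?_ ?_)⟩
  · simp [toGaloisFiberProduct_apply, MonoidHom.mem_ker.1 hn]
  · simp [toGaloisFiberProduct_apply, hnγ]

theorem ker_eq_map_ker_of_comp_eq (hcomm : πt.comp q = (QuotientGroup.mk' H').comp π)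
    (hq : Surjective q) (hH' : H' = q.ker.map π) : πt.ker = π.ker.map q := by
  rw [← Subgroup.map_comap_eq_self_of_surjective hq πt.ker, MonoidHom.comap_ker, hcomm,
    ← MonoidHom.comap_ker, QuotientGroup.ker_mk', hH', Subgroup.comap_map_eq, Subgroup.map_sup,
    (Subgroup.map_eq_bot_iff _).2 le_rfl, bot_sup_eq]

end Pullback

theorem MonoidHom.injective_comp_of_ker_inf_range_eq_bot {G E Et : Type*} [Group G] [Group E]
    [Group Et] {ι : G →* E} {q : E →* Et} (hι : Injective ι) (h : q.ker ⊓ ι.range = ⊥) :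
    Injective (q.comp ι) :=
  (injective_iff_map_eq_one _).2 fun g hg => hι <| by
    rw [map_one, ← Subgroup.mem_bot, ← h]
    exact ⟨hg, g, rfl⟩

theorem exists_openNormalSubgroup_inf_eq_bot {E : Type*} [Group E] [TopologicalSpace E]
    [IsTopologicalGroup E] [CompactSpace E] [T1Space E] [TotallyDisconnectedSpace E]
    {K : Subgroup E} (hK : (K : Set E).Finite) :
    ∃ N : OpenNormalSubgroup E, N.toSubgroup ⊓ K = ⊥ := by
  obtain ⟨N, hN⟩ := ProfiniteGrp.exist_openNormalSubgroup_sub_open_nhds_of_one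
    (hK.subset Set.sdiff_subset).isClosed.isOpen_compl (by simp : (1 : E) ∉ (K : Set E) \ {1})
  refine ⟨N, (Subgroup.eq_bot_iff_forall _).2 fun x ⟨hxN, hxK⟩ => ?_⟩
  by_contra hx
  exact hN hxN ⟨hxK, hx⟩

theorem profinite_extension_is_pullback_general
    {G E Γ : Type*} [Group G] [Finite G]
    [Group E] [TopologicalSpace E] [IsTopologicalGroup E]
    [CompactSpace E] [TotallyDisconnectedSpace E]
    [Group Γ] [TopologicalSpace Γ] [T2Space Γ]
    (ι : G →* E) (π : E →* Γ) (hπcont : Continuous π)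
    (hι : Function.Injective ι) (hπ : Function.Surjective π)
    (hexact : ι.range = π.ker) :
    ∃ H' : Subgroup Γ, ∃ _ : H'.Normal, IsOpen (H' : Set Γ) ∧
      ∃ (Et : Type) (_ : Group Et) (_ : Finite Et)
        (πt : Et →* Γ ⧸ H') (ιt : G →* Et),
        Function.Surjective πt ∧ Function.Injective ιt ∧ ιt.range = πt.ker ∧
        ∃ e : E ≃* galoisFiberProduct H' πt,
          (letI : TopologicalSpace Et := ⊥
           Continuous (e : E → galoisFiberProduct H' πt) ∧
             Continuous (e.symm : galoisFiberProduct H' πt → E)) := by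
  obtain ⟨N, hN⟩ :=
    exists_openNormalSubgroup_inf_eq_bot (K := π.ker) (hexact ▸ Set.finite_range ι)
  set H' := N.toSubgroup.map π
  have hH'normal : H'.Normal := N.isNormal'.map π hπ
  have hH'open : IsOpen (H' : Set Γ) :=
    (MonoidHom.isOpenQuotientMap_of_isQuotientMap
      (hπcont.isClosedMap.isQuotientMap hπcont hπ)).isOpenMap _ N.isOpen'
  let s : Shrink.{0} (E ⧸ N.toSubgroup) ≃* E ⧸ N.toSubgroup := Shrink.mulEquiv
  let q : E →* Shrink.{0} (E ⧸ N.toSubgroup) := s.symm.toMonoidHom.comp (QuotientGroup.mk' _)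
  let πt := (QuotientGroup.map _ H' π (Subgroup.le_comap_map π _)).comp s.toMonoidHom
  have hcomm : πt.comp q = (QuotientGroup.mk' H').comp π := by ext; simp [πt, q]
  have hq : Surjective q := s.symm.surjective.comp (QuotientGroup.mk'_surjective _)
  have hkerq : q.ker = N.toSubgroup := by simp [q]
  have hbij : Bijective (toGaloisFiberProduct hcomm) :=
    ⟨(MonoidHom.ker_eq_bot_iff _).1 (by rw [ker_toGaloisFiberProduct, hkerq, hN]),
      toGaloisFiberProduct_surjective hcomm hq (by rw [hkerq])⟩
  refine ⟨H', hH'normal, hH'open, _, inferInstance, .of_equiv _ s.symm.toEquiv, πt, q.comp ι,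
    .of_comp (g := q) ?_, ?_, ?_, MulEquiv.ofBijective _ hbij, ?_⟩
  · rw [← MonoidHom.coe_comp, hcomm]
    exact (QuotientGroup.mk'_surjective H').comp hπ
  · exact MonoidHom.injective_comp_of_ker_inf_range_eq_bot hι (by rw [hkerq, hexact, hN])
  · rw [MonoidHom.range_comp, hexact, ker_eq_map_ker_of_comp_eq hcomm hq (by rw [hkerq])]
  let : TopologicalSpace (Shrink.{0} (E ⧸ N.toSubgroup)) := ⊥
  have : DiscreteTopology (Shrink.{0} (E ⧸ N.toSubgroup)) := ⟨rfl⟩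
  have : DiscreteTopology (E ⧸ N.toSubgroup) := QuotientGroup.discreteTopology N.isOpen'
  have hqcont : Continuous q :=
    Continuous.comp (g := s.symm) continuous_of_discreteTopology continuous_quotient_mk'
  have hcont : Continuous (toGaloisFiberProduct hcomm) := (hqcont.prodMk hπcont).subtype_mk _
  exact ⟨hcont, hcont.continuous_symm_of_equiv_compact_to_t2
    (f := (MulEquiv.ofBijective _ hbij).toEquiv)⟩

/-- Every continuous extension `1 → G → E → Γ → 1` of profinite groups by a finite
group `G` is the pullback of an extension of finite groups: there are an open normal
subgroup `H' ⊴ Γ` and an extension `1 → G → Ẽ → Γ/H' → 1` of finite groups with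
`E ≅ Ẽ ×_{Γ/H'} Γ` as topological groups, where `Ẽ` carries the discrete topology
and the fiber product the subspace topology of the product. -/
theorem profinite_extension_is_pullback
    {G E Γ : Type*} [Group G] [Finite G]
    [Group E] [TopologicalSpace E] [IsTopologicalGroup E]
    [CompactSpace E] [T2Space E] [TotallyDisconnectedSpace E]
    [Group Γ] [TopologicalSpace Γ] [IsTopologicalGroup Γ]
    [CompactSpace Γ] [T2Space Γ] [TotallyDisconnectedSpace Γ]
    (ι : G →* E) (π : E →* Γ) (hπcont : Continuous π)
    (hι : Function.Injective ι) (hπ : Function.Surjective π)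
    (hexact : ι.range = π.ker) (hclosed : IsClosed (ι.range : Set E)) :
    ∃ H' : Subgroup Γ, ∃ _ : H'.Normal, IsOpen (H' : Set Γ) ∧
      ∃ (Et : Type) (_ : Group Et) (_ : Finite Et)
        (πt : Et →* Γ ⧸ H') (ιt : G →* Et),
        Function.Surjective πt ∧ Function.Injective ιt ∧ ιt.range = πt.ker ∧
        ∃ e : E ≃* galoisFiberProduct H' πt,
          (letI : TopologicalSpace Et := ⊥
           Continuous (e : E → galoisFiberProduct H' πt) ∧
             Continuous (e.symm : galoisFiberProduct H' πt → E)) :=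
  profinite_extension_is_pullback_general ι π hπcont hι hπ hexact
end

section
/- Let A be a graded ring generated over A₀ = k by finitely many elements (not necessarily of the same degree), where k is a field. Then there exists d ≥ 1 such that the Veronese subring A^{(d)} = ⊕_{m≥0} A_{md} is generated as a k-algebra by A_d, i.e., by finitely many elements of degree d. -/
/-!
Let `e` be the product of the positive degrees of the generators. Every element of `A_{md}` is
a combination of monomials of degree `md` in the generators, so it is enough to split such a
monomial into monomials of degree `d = e²`. This is pigeonhole: a multiset of divisors of `e` with
sum at least `e²` contains some divisor `v` at least `e / v` times, so it has a sub-multiset with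
sum exactly `e`; repeating this `e` times cuts off degree `e²` from any monomial of degree at
least `2e²`. Degree-`0` generators are scalars since `A₀ = k`.
-/

namespace Multiset

theorem exists_le_map_eq_of_le_map {α β : Type*} {f : α → β} {N : Multiset β}
    {M : Multiset α} (h : N ≤ M.map f) : ∃ N' ≤ M, N'.map f = N := by
  classical
  induction M using Multiset.induction generalizing N with
  | empty => exact ⟨0, le_rfl, (le_zero.mp (by simpa using h)).symm⟩
  | cons a M ih =>
    rw [map_cons] at h
    by_cases ha : f a ∈ N
    · obtain ⟨N', hN', hmap⟩ := ih (erase_le_iff_le_cons.mpr h)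
      exact ⟨a ::ₘ N', cons_le_cons a hN', by rw [map_cons, hmap, cons_erase ha]⟩
    · obtain ⟨N', hN', hmap⟩ := ih ((le_cons_of_notMem ha).mp h)
      exact ⟨N', hN'.trans (le_cons_self M a), hmap⟩

theorem exists_le_sum_eq_of_dvd {e : ℕ} (he : e ≠ 0) {D : Multiset ℕ}
    (hD : ∀ a ∈ D, a ≠ 0 → a ∣ e) (hsum : e * e ≤ D.sum) : ∃ N ≤ D, N.sum = e := by
  classical
  obtain ⟨v, hv, hcount⟩ : ∃ v ∈ e.divisors, e ≤ D.count v * v := by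
    by_contra! hlt
    have hsupp : D.toFinset ⊆ insert 0 e.divisors := by
      intro a ha
      by_cases ha0 : a = 0
      · exact Finset.mem_insert.mpr (Or.inl ha0)
      · exact Finset.mem_insert_of_mem (Nat.mem_divisors.mpr ⟨hD a (mem_toFinset.mp ha) ha0, he⟩)
    have : D.sum < e * e := calc
      D.sum = ∑ v ∈ e.divisors, D.count v * v := by
        rw [Finset.sum_multiset_count_of_subset D _ hsupp, Finset.sum_insert (by simp)]
        simp
      _ < ∑ _v ∈ e.divisors, e := Finset.sum_lt_sum_of_nonempty ⟨1, by simp [he]⟩ hlt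
      _ = e.divisors.card * e := by rw [Finset.sum_const, smul_eq_mul]
      _ ≤ e * e := Nat.mul_le_mul_right e (Nat.card_divisors_le_self e)
    omega
  refine ⟨replicate (e / v) v, le_count_iff_replicate_le.mp ?_, ?_⟩
  · exact Nat.div_le_of_le_mul (by rwa [mul_comm])
  · rw [sum_replicate, smul_eq_mul, Nat.div_mul_cancel (Nat.dvd_of_mem_divisors hv)]

theorem exists_le_sum_eq_mul_of_dvd {e : ℕ} (he : e ≠ 0) {D : Multiset ℕ}
    (hD : ∀ a ∈ D, a ≠ 0 → a ∣ e) (j : ℕ) (hsum : (j + e) * e ≤ D.sum) :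
    ∃ N ≤ D, N.sum = j * e := by
  induction j generalizing D with
  | zero => exact ⟨0, zero_le _, by simp⟩
  | succ j ih =>
    obtain ⟨N₀, hN₀, hsum₀⟩ := exists_le_sum_eq_of_dvd he hD (by nlinarith)
    have hsplit : D.sum = e + (D - N₀).sum := by
      rw [← hsum₀, ← sum_add, add_tsub_cancel_of_le hN₀]
    obtain ⟨N₁, hN₁, hsum₁⟩ :=
      ih (fun a ha => hD a (mem_of_le tsub_le_self ha)) (by nlinarith)
    refine ⟨N₀ + N₁, ?_, by rw [sum_add, hsum₀, hsum₁]; ring⟩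
    exact (add_le_add le_rfl hN₁).trans (add_tsub_cancel_of_le hN₀).le

end Multiset

theorem SetLike.multiset_prod_mem_graded {ι R S : Type*} [AddCommMonoid ι] [CommMonoid R]
    [SetLike S R] (A : ι → S) [SetLike.GradedMonoid A] (deg : R → ι) (M : Multiset R)
    (h : ∀ y ∈ M, y ∈ A (deg y)) : M.prod ∈ A (M.map deg).sum := by
  induction M using Quot.induction_on with
  | h l => simpa using SetLike.list_prod_map_mem_graded l deg id h

namespace GradedAlgebra

variable {R A : Type*} [CommSemiring R] [CommSemiring A] [Algebra R A]

theorem le_of_forall_multiset_prod_mem {ι : Type*} [DecidableEq ι] [AddCommMonoid ι]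
    (𝒜 : ι → Submodule R A) [GradedAlgebra 𝒜] {s : Set A} (hgen : Algebra.adjoin R s = ⊤)
    (deg : A → ι) (hdeg : ∀ x ∈ s, x ∈ 𝒜 (deg x)) (P : Submodule R A) (i : ι)
    (hP : ∀ M : Multiset A, (∀ y ∈ M, y ∈ s) → (M.map deg).sum = i → M.prod ∈ P) :
    𝒜 i ≤ P := by
  have hspan : Submodule.span R (Submonoid.closure s : Set A) ≤ P.comap (proj 𝒜 i) := by
    rw [Submodule.span_le]
    intro t ht
    obtain ⟨M, hMs, rfl⟩ := Submonoid.exists_multiset_of_mem_closure ht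
    have hM := SetLike.multiset_prod_mem_graded 𝒜 deg M fun y hy => hdeg y (hMs y hy)
    by_cases hi : (M.map deg).sum = i
    · rw [SetLike.mem_coe, Submodule.mem_comap, proj_apply,
        DirectSum.decompose_of_mem_same 𝒜 (hi ▸ hM)]
      exact hP M hMs hi
    · simp [proj_apply, DirectSum.decompose_of_mem_ne 𝒜 hM hi]
  intro x hx
  have hx' : x ∈ Submodule.span R (Submonoid.closure s : Set A) := by
    rw [← Algebra.adjoin_eq_span, hgen]
    trivial
  simpa [proj_apply, DirectSum.decompose_of_mem_same 𝒜 hx] using hspan hx'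

theorem multiset_prod_mem_adjoin_of_sum_eq_mul (𝒜 : ℕ → Submodule R A) [GradedAlgebra 𝒜]
    (h0 : ∀ x ∈ 𝒜 0, ∃ c : R, algebraMap R A c = x) {deg : A → ℕ} {e : ℕ} (he : e ≠ 0)
    {M : Multiset A} (hM : ∀ y ∈ M, y ∈ 𝒜 (deg y)) (hdvd : ∀ y ∈ M, deg y ≠ 0 → deg y ∣ e)
    (m : ℕ) (hsum : (M.map deg).sum = m * (e * e)) :
    M.prod ∈ Algebra.adjoin R (𝒜 (e * e) : Set A) := by
  classical
  induction m generalizing M with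
  | zero =>
    obtain ⟨c, hc⟩ :=
      h0 M.prod (by simpa [hsum] using SetLike.multiset_prod_mem_graded 𝒜 deg M hM)
    exact hc ▸ Subalgebra.algebraMap_mem _ c
  | succ m ih =>
    rcases m with _ | m
    · exact Algebra.subset_adjoin
        (by simpa [hsum] using SetLike.multiset_prod_mem_graded 𝒜 deg M hM)
    obtain ⟨D, hD, hDsum⟩ := Multiset.exists_le_sum_eq_mul_of_dvd he (D := M.map deg)
      (by simpa using hdvd) e (by rw [hsum]; nlinarith)
    obtain ⟨N, hNM, rfl⟩ := Multiset.exists_le_map_eq_of_le_map hD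
    have hrest : ∀ y ∈ M - N, y ∈ M := fun y hy => Multiset.mem_of_le tsub_le_self hy
    have hN : N.prod ∈ 𝒜 (e * e) := hDsum ▸
      SetLike.multiset_prod_mem_graded 𝒜 deg N fun y hy => hM y (Multiset.mem_of_le hNM hy)
    have hsum_rest : ((M - N).map deg).sum = (m + 1) * (e * e) := by
      have hsplit : (M.map deg).sum = e * e + ((M - N).map deg).sum := by
        rw [← hDsum, ← Multiset.sum_add, ← Multiset.map_add, add_tsub_cancel_of_le hNM]
      rw [hsum] at hsplit
      linarith
    have hprod : M.prod = N.prod * (M - N).prod := by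
      rw [← Multiset.prod_add, add_tsub_cancel_of_le hNM]
    rw [hprod]
    exact Subalgebra.mul_mem _ (Algebra.subset_adjoin hN)
      (ih (fun y hy => hM y (hrest y hy)) (fun y hy => hdvd y (hrest y hy)) hsum_rest)

end GradedAlgebra

/-- Let `A = ⊕ Aₘ` be a commutative graded ring with `A₀ = k` a field, generated as a
`k`-algebra by finitely many homogeneous elements. Then there is `d ≥ 1` such that
the Veronese subring `A^{(d)} = ⊕ A_{md}` is generated as a `k`-algebra by the
degree-`d` part `A_d`. -/
theorem veronese_generated_in_single_degree
    {k A : Type*} [Field k] [CommRing A] [Algebra k A]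
    (𝒜 : ℕ → Submodule k A) [GradedAlgebra 𝒜]
    (h0 : ∀ x ∈ 𝒜 0, ∃ c : k, algebraMap k A c = x)
    (s : Finset A) (hhom : ∀ x ∈ s, SetLike.IsHomogeneousElem 𝒜 x)
    (hgen : Algebra.adjoin k (s : Set A) = ⊤) :
    ∃ d : ℕ, 1 ≤ d ∧
      ∀ m : ℕ, (𝒜 (m * d) : Set A) ⊆
        (Algebra.adjoin k ((𝒜 d : Submodule k A) : Set A) : Subalgebra k A) := by
  choose! deg hdeg using hhom
  set e := ∏ x ∈ s, max 1 (deg x)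
  have he : e ≠ 0 := Finset.prod_ne_zero_iff.mpr fun x _ => by omega
  have hdvd : ∀ x ∈ s, deg x ≠ 0 → deg x ∣ e := fun x hx hx0 =>
    max_eq_right (Nat.one_le_iff_ne_zero.mpr hx0) ▸ Finset.dvd_prod_of_mem _ hx
  refine ⟨e * e, Nat.one_le_iff_ne_zero.mpr (mul_ne_zero he he), fun m => ?_⟩
  exact GradedAlgebra.le_of_forall_multiset_prod_mem 𝒜 hgen deg hdeg
    (Subalgebra.toSubmodule (Algebra.adjoin k (𝒜 (e * e) : Set A))) (m * (e * e))
    fun M hMs hsum => GradedAlgebra.multiset_prod_mem_adjoin_of_sum_eq_mul 𝒜 h0 he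
      (fun y hy => hdeg y (hMs y hy)) (fun y hy => hdvd y (hMs y hy)) m hsum
end
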